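/- Fix 0 < ε ≤ 0.001 and suppose A ∈ ℝ^{m×n} satisfies the Measurement Distribution Condition with constant ε. Then for every nonzero x_* ∈ ℝ^n and every x ∈ ℝ^n with ‖x − x_*‖ ≤ ε‖x_*‖, we have ‖(A_x − A_{x_*})x_*‖ ≤ sqrt(4ε + 16ε/π)·‖x − x_*‖ ≤ (1/8)‖x − x_*‖. -/

import Mathlib

noncomputable section
open Matrix MeasureTheory ProbabilityTheory Real

/-- Euclidean norm on `Fin n → ℝ`. -/
def enorm' {n : ℕ} (x : Fin n → ℝ) : ℝ := Real.sqrt (∑ i, x i ^ 2)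

/-- Euclidean inner product. -/
def dotp {n : ℕ} (x y : Fin n → ℝ) : ℝ := ∑ i, x i * y i

/-- Angle between two vectors. -/
def angle' {n : ℕ} (x y : Fin n → ℝ) : ℝ :=
  Real.arccos (dotp x y / (enorm' x * enorm' y))

/-- Normalization `x̂ = x / ‖x‖`. -/
def unitize {n : ℕ} (x : Fin n → ℝ) : Fin n → ℝ := (enorm' x)⁻¹ • x

/-- The symmetric matrix `M_{x̂↔ŷ}` sending `x̂ ↦ ŷ`, `ŷ ↦ x̂`, and `z ↦ 0`
for `z ⊥ span{x,y}`. -/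
def Mswap {n : ℕ} (x y : Fin n → ℝ) : Matrix (Fin n) (Fin n) ℝ :=
  let u := unitize x
  let v := unitize y
  let c := dotp u v
  if c ^ 2 = 1 then Matrix.vecMulVec u v
  else (1 / (1 - c ^ 2)) • (Matrix.vecMulVec u v + Matrix.vecMulVec v u)
       - (c / (1 - c ^ 2)) • (Matrix.vecMulVec u u + Matrix.vecMulVec v v)

/-- Operator (spectral) norm of a matrix, w.r.t. Euclidean norms. -/
def opNorm {m n : ℕ} (M : Matrix (Fin m) (Fin n) ℝ) : ℝ :=
  ‖(LinearMap.toContinuousLinearMap (Matrix.toEuclideanLin M))‖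

/-- `A_x = diag(sgn(Ax)) A` where `sgn` is applied entrywise. -/
def Asgn {m n : ℕ} (A : Matrix (Fin m) (Fin n) ℝ) (x : Fin n → ℝ) :
    Matrix (Fin m) (Fin n) ℝ :=
  Matrix.diagonal (fun i => Real.sign (A.mulVec x i)) * A

/-- `Φ_{x,y}`. -/
def Phi {n : ℕ} (x y : Fin n → ℝ) : Matrix (Fin n) (Fin n) ℝ :=
  if x ≠ 0 ∧ y ≠ 0 then
    ((π - 2 * angle' x y) / π) • (1 : Matrix (Fin n) (Fin n) ℝ)
      + (2 * Real.sin (angle' x y) / π) • Mswap x y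
  else 0

/-- The Measurement Distribution Condition with constant `ε`. -/
def MDC {m n : ℕ} (A : Matrix (Fin m) (Fin n) ℝ) (ε : ℝ) : Prop :=
  ∀ x y : Fin n → ℝ, opNorm ((Asgn A x)ᵀ * Asgn A y - Phi x y) ≤ ε

/-- `dist(x, x_*) = min(‖x - x_*‖, ‖x + x_*‖)`. -/
def pdist {n : ℕ} (x y : Fin n → ℝ) : ℝ := min (enorm' (x - y)) (enorm' (x + y))


variable {n : ℕ}

lemma dotp_comm (x y : Fin n → ℝ) : dotp x y = dotp y x := by
  simp [dotp, mul_comm]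

lemma dotp_self_nonneg (x : Fin n → ℝ) : 0 ≤ dotp x x :=
  Finset.sum_nonneg fun i _ => mul_self_nonneg _

lemma enorm_eq_sqrt_dotp (x : Fin n → ℝ) : enorm' x = Real.sqrt (dotp x x) := by
  simp [enorm', dotp, sq]

lemma enorm_nonneg (x : Fin n → ℝ) : 0 ≤ enorm' x := Real.sqrt_nonneg _

lemma enorm_sq (x : Fin n → ℝ) : enorm' x ^ 2 = dotp x x := by
  rw [enorm_eq_sqrt_dotp, Real.sq_sqrt (dotp_self_nonneg x)]

lemma enorm'_pos (x : Fin n → ℝ) (hx : x ≠ 0) : 0 < enorm' x := by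
  rcases (enorm_nonneg x).lt_or_eq with h | h
  · exact h
  · exfalso; apply hx
    have hle : ∑ i, x i ^ 2 ≤ 0 := Real.sqrt_eq_zero'.1 h.symm
    have h2 : 0 ≤ ∑ i, x i ^ 2 := Finset.sum_nonneg fun i _ => sq_nonneg _
    have h0 : ∑ i, x i ^ 2 = 0 := le_antisymm hle h2
    funext i
    have := (Finset.sum_eq_zero_iff_of_nonneg (fun i _ => sq_nonneg (x i))).1 h0 i (Finset.mem_univ i)
    exact pow_eq_zero_iff (by norm_num) |>.1 this

lemma dotp_cauchy (x y : Fin n → ℝ) : (dotp x y) ^ 2 ≤ dotp x x * dotp y y := by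
  have := Finset.sum_mul_sq_le_sq_mul_sq Finset.univ x y
  simpa [dotp, sq] using this

lemma dotp_add_left (x y z : Fin n → ℝ) : dotp (x + y) z = dotp x z + dotp y z := by
  simp [dotp, add_mul, Finset.sum_add_distrib]

lemma dotp_sub_left (x y z : Fin n → ℝ) : dotp (x - y) z = dotp x z - dotp y z := by
  simp [dotp, sub_mul, Finset.sum_sub_distrib]

lemma dotp_add_right (x y z : Fin n → ℝ) : dotp x (y + z) = dotp x y + dotp x z := by
  simp [dotp, mul_add, Finset.sum_add_distrib]

lemma dotp_sub_right (x y z : Fin n → ℝ) : dotp x (y - z) = dotp x y - dotp x z := by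
  simp [dotp, mul_sub, Finset.sum_sub_distrib]

lemma dotp_smul_left (a : ℝ) (x y : Fin n → ℝ) : dotp (a • x) y = a * dotp x y := by
  simp [dotp, Finset.mul_sum, mul_assoc]

lemma dotp_smul_right (a : ℝ) (x y : Fin n → ℝ) : dotp x (a • y) = a * dotp x y := by
  simp [dotp, Finset.mul_sum]; ring_nf; simp [mul_comm, mul_assoc, mul_left_comm]

lemma dotp_zero_left (y : Fin n → ℝ) : dotp 0 y = 0 := by simp [dotp]

lemma dotp_unitize (x y : Fin n → ℝ) :
    dotp (unitize x) (unitize y) = dotp x y / (enorm' x * enorm' y) := by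
  simp [unitize, dotp_smul_left, dotp_smul_right, div_eq_mul_inv, mul_inv]
  ring

lemma dotp_unitize_self (x : Fin n → ℝ) (hx : x ≠ 0) :
    dotp (unitize x) (unitize x) = 1 := by
  rw [dotp_unitize, ← enorm_sq, sq]
  field_simp [(enorm'_pos x hx).ne']

lemma vecMulVec_mulVec (u v h : Fin n → ℝ) :
    (Matrix.vecMulVec u v).mulVec h = (dotp v h) • u := by
  funext i
  simp [Matrix.mulVec, Matrix.vecMulVec_apply, dotProduct, dotp, Finset.sum_mul,
    Finset.mul_sum]
  ring_nf

lemma enorm_mono (v w : Fin n → ℝ) (h : ∀ i, v i ^ 2 ≤ w i ^ 2) : enorm' v ≤ enorm' w :=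
  Real.sqrt_le_sqrt (Finset.sum_le_sum fun i _ => h i)

lemma enorm_eq_norm (x : Fin n → ℝ) :
    enorm' x = ‖(WithLp.equiv 2 (Fin n → ℝ)).symm x‖ := by
  rw [EuclideanSpace.norm_eq]
  simp [enorm', sq_abs]

lemma abs_dotp_mulVec_le (M : Matrix (Fin n) (Fin n) ℝ) (u w : Fin n → ℝ) :
    |dotp u (M.mulVec w)| ≤ opNorm M * (enorm' u * enorm' w) := by
  set T := LinearMap.toContinuousLinearMap (Matrix.toEuclideanLin M) with hT
  set u' : EuclideanSpace ℝ (Fin n) := (WithLp.equiv 2 (Fin n → ℝ)).symm u with hu'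
  set w' : EuclideanSpace ℝ (Fin n) := (WithLp.equiv 2 (Fin n → ℝ)).symm w with hw'
  have h1 : (inner ℝ u' (T w') : ℝ) = dotp u (M.mulVec w) := by
    have hTw : T w' = (WithLp.equiv 2 (Fin n → ℝ)).symm (M.mulVec w) := by
      simp [hT, hw', Matrix.toEuclideanLin_apply_piLp_toLp]
    rw [hTw]
    simp [PiLp.inner_apply, hu', dotp, RCLike.inner_apply, mul_comm]
  calc |dotp u (M.mulVec w)| = |(inner ℝ u' (T w') : ℝ)| := by rw [h1]
    _ ≤ ‖u'‖ * ‖T w'‖ := abs_real_inner_le_norm _ _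
    _ ≤ ‖u'‖ * (‖T‖ * ‖w'‖) :=
        mul_le_mul_of_nonneg_left (T.le_opNorm w') (norm_nonneg u')
    _ = opNorm M * (enorm' u * enorm' w) := by
        rw [enorm_eq_norm, enorm_eq_norm, opNorm]; ring

lemma dotp_transpose_mulVec {m : ℕ} (M : Matrix (Fin m) (Fin n) ℝ) (u : Fin n → ℝ) (z : Fin m → ℝ) :
    dotp u (Mᵀ.mulVec z) = dotp (M.mulVec u) z := by
  have : dotp u (Mᵀ.mulVec z) = u ⬝ᵥ (Mᵀ *ᵥ z) := rfl
  rw [this, Matrix.dotProduct_mulVec, Matrix.vecMul_transpose]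
  rfl

lemma sign_sq_le (s t : ℝ) :
    ((Real.sign s - Real.sign t) * t) ^ 2 ≤ ((Real.sign s - Real.sign t) * (s - t)) ^ 2 := by
  rcases lt_trichotomy s 0 with hs | hs | hs <;> rcases lt_trichotomy t 0 with ht | ht | ht <;>
    simp [Real.sign_of_pos, Real.sign_of_neg, Real.sign_zero, hs, ht] <;> nlinarith

lemma Mswap_eq (x y : Fin n → ℝ) : Mswap x y =
    if (dotp (unitize x) (unitize y)) ^ 2 = 1 then Matrix.vecMulVec (unitize x) (unitize y)
    else (1 / (1 - (dotp (unitize x) (unitize y)) ^ 2)) •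
           (Matrix.vecMulVec (unitize x) (unitize y) + Matrix.vecMulVec (unitize y) (unitize x))
       - ((dotp (unitize x) (unitize y)) / (1 - (dotp (unitize x) (unitize y)) ^ 2)) •
           (Matrix.vecMulVec (unitize x) (unitize x) + Matrix.vecMulVec (unitize y) (unitize y)) :=
  rfl

lemma quad_eval (u v h : Fin n → ℝ) (c : ℝ) (hcne : (1:ℝ) - c^2 ≠ 0) :
    dotp h ((((1:ℝ)/(1-c^2)) • (Matrix.vecMulVec u v + Matrix.vecMulVec v u)
      - (c/(1-c^2)) • (Matrix.vecMulVec u u + Matrix.vecMulVec v v)).mulVec h)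
    = (2*(dotp u h)*(dotp v h) - c*((dotp u h)^2 + (dotp v h)^2))/(1-c^2) := by
  rw [Matrix.sub_mulVec, Matrix.smul_mulVec, Matrix.smul_mulVec,
    Matrix.add_mulVec, Matrix.add_mulVec,
    vecMulVec_mulVec, vecMulVec_mulVec, vecMulVec_mulVec, vecMulVec_mulVec]
  rw [dotp_sub_right, dotp_smul_right, dotp_smul_right,
    dotp_add_right, dotp_add_right, dotp_smul_right, dotp_smul_right,
    dotp_smul_right, dotp_smul_right, dotp_comm h u, dotp_comm h v]
  field_simp
  ring

lemma aux_abs (a b c : ℝ) (h1 : -1 ≤ c) (h2 : c ≤ 1) :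
    |2*a*b - c*(a^2 + b^2)| ≤ a^2 - 2*c*a*b + b^2 := by
  rw [abs_le]
  constructor
  · nlinarith [mul_nonneg (by linarith : (0:ℝ) ≤ 1 - c) (sq_nonneg (a + b))]
  · nlinarith [mul_nonneg (by linarith : (0:ℝ) ≤ 1 + c) (sq_nonneg (a - b))]

set_option maxHeartbeats 1000000 in
lemma abs_dotp_Mswap_le (x y h : Fin n → ℝ) (hx : x ≠ 0) (hy : y ≠ 0)
    (hc : (dotp (unitize x) (unitize y)) ^ 2 ≠ 1) :
    |dotp h ((Mswap x y).mulVec h)| ≤ enorm' h ^ 2 := by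
  set u := unitize x with hu
  set v := unitize y with hv
  set c := dotp u v with hcdef
  set a := dotp u h with ha
  set b := dotp v h with hb
  set H := dotp h h with hH
  have huu : dotp u u = 1 := dotp_unitize_self x hx
  have hvv : dotp v v = 1 := dotp_unitize_self y hy
  have hc2' : c ^ 2 ≤ 1 := by
    have := dotp_cauchy u v; rw [huu, hvv] at this; simpa using this
  have hc2 : c ^ 2 < 1 := lt_of_le_of_ne hc2' hc
  have hpos : (0:ℝ) < 1 - c ^ 2 := by linarith
  have hcle : c ≤ 1 := by nlinarith
  have hcge : -1 ≤ c := by nlinarith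
  have hm : dotp h ((Mswap x y).mulVec h)
      = (2*a*b - c*(a^2 + b^2)) / (1 - c^2) := by
    rw [Mswap_eq, if_neg hc]
    exact quad_eval u v h c hpos.ne'
  set α : ℝ := (a - c*b)/(1 - c^2) with hα
  set β : ℝ := (b - c*a)/(1 - c^2) with hβ
  have hα2 : α * (1 - c^2) = a - c*b := by rw [hα]; field_simp
  have hβ2 : β * (1 - c^2) = b - c*a := by rw [hβ]; field_simp
  have hexp : dotp (h - α•u - β•v) (h - α•u - β•v)
      = H - 2*α*a - 2*β*b + α^2 + β^2 + 2*α*β*c := by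
    rw [dotp_sub_left, dotp_sub_left, dotp_sub_right, dotp_sub_right, dotp_sub_right,
      dotp_sub_right, dotp_sub_right, dotp_sub_right]
    rw [dotp_smul_left, dotp_smul_left, dotp_smul_left, dotp_smul_left,
      dotp_smul_left, dotp_smul_left]
    simp only [dotp_smul_right]
    rw [dotp_comm h u, dotp_comm h v, dotp_comm v u]
    rw [← ha, ← hb, ← hH, huu, hvv, ← hcdef]
    ring
  have hbessel : 0 ≤ H - 2*α*a - 2*β*b + α^2 + β^2 + 2*α*β*c := by
    rw [← hexp]; exact dotp_self_nonneg _
  have hident : (1 - c^2)^2 * (H - 2*α*a - 2*β*b + α^2 + β^2 + 2*α*β*c)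
      = (1 - c^2) * ((1 - c^2) * H) - 2*(1 - c^2)*((a - c*b)*a + (b - c*a)*b)
        + ((a - c*b)^2 + (b - c*a)^2 + 2*(a - c*b)*(b - c*a)*c) := by
    rw [← hα2, ← hβ2]; ring
  have key : a^2 - 2*c*a*b + b^2 ≤ (1 - c^2) * H := by
    have h0 := mul_nonneg (sq_nonneg ((1:ℝ) - c^2)) hbessel
    rw [hident] at h0
    have h1 : 0 ≤ (1 - c^2) * ((1 - c^2) * H - (a^2 - 2*c*a*b + b^2)) := by
      rw [show (1 - c^2) * ((1 - c^2) * H - (a^2 - 2*c*a*b + b^2))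
        = (1 - c^2) * ((1 - c^2) * H) - 2*(1 - c^2)*((a - c*b)*a + (b - c*a)*b)
          + ((a - c*b)^2 + (b - c*a)^2 + 2*(a - c*b)*(b - c*a)*c) from by ring]
      exact h0
    have h2 := (mul_nonneg_iff_of_pos_left hpos).1 h1
    linarith
  have habs := aux_abs a b c hcge hcle
  rw [hm, abs_div, abs_of_pos hpos, div_le_iff₀ hpos, enorm_sq, ← hH]
  calc |2*a*b - c*(a^2 + b^2)| ≤ a^2 - 2*c*a*b + b^2 := habs
    _ ≤ (1 - c^2) * H := key
    _ = H * (1 - c^2) := by ring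

variable {m : ℕ}

lemma angle'_self (x : Fin n → ℝ) (hx : x ≠ 0) : angle' x x = 0 := by
  rw [angle']
  have h : dotp x x / (enorm' x * enorm' x) = 1 := by
    rw [← enorm_sq, sq]
    field_simp [(enorm'_pos x hx).ne']
  rw [h, Real.arccos_one]

lemma Phi_self (x : Fin n → ℝ) (hx : x ≠ 0) : Phi x x = 1 := by
  rw [Phi, if_pos ⟨hx, hx⟩, angle'_self x hx]
  simp [Real.pi_ne_zero]

lemma Asgn_mulVec (A : Matrix (Fin m) (Fin n) ℝ) (x v : Fin n → ℝ) (i : Fin m) :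
    (Asgn A x).mulVec v i = Real.sign (A.mulVec x i) * A.mulVec v i := by
  rw [Asgn, ← Matrix.mulVec_mulVec, Matrix.mulVec_diagonal]

lemma dotp_Phi (x y h : Fin n → ℝ) (hx : x ≠ 0) (hy : y ≠ 0) :
    dotp h ((Phi x y).mulVec h)
      = ((π - 2 * angle' x y) / π) * dotp h h
        + (2 * Real.sin (angle' x y) / π) * dotp h ((Mswap x y).mulVec h) := by
  rw [Phi, if_pos ⟨hx, hy⟩, Matrix.add_mulVec, Matrix.smul_mulVec,
    Matrix.smul_mulVec, Matrix.one_mulVec, dotp_add_right,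
    dotp_smul_right, dotp_smul_right]

lemma dotp_cross (A : Matrix (Fin m) (Fin n) ℝ) (x y h : Fin n → ℝ) :
    dotp ((Asgn A x).mulVec h) ((Asgn A y).mulVec h)
      = dotp h (((Asgn A x)ᵀ * Asgn A y).mulVec h) := by
  rw [← dotp_transpose_mulVec, Matrix.mulVec_mulVec]

lemma cross_bound (A : Matrix (Fin m) (Fin n) ℝ) (ε : ℝ) (hA : MDC A ε)
    (x y h : Fin n → ℝ) :
    |dotp ((Asgn A x).mulVec h) ((Asgn A y).mulVec h) - dotp h ((Phi x y).mulVec h)|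
      ≤ ε * (enorm' h * enorm' h) := by
  rw [dotp_cross, ← dotp_sub_right, ← Matrix.sub_mulVec]
  calc |dotp h ((((Asgn A x)ᵀ * Asgn A y) - Phi x y).mulVec h)|
      ≤ opNorm (((Asgn A x)ᵀ * Asgn A y) - Phi x y) * (enorm' h * enorm' h) :=
        abs_dotp_mulVec_le _ _ _
    _ ≤ ε * (enorm' h * enorm' h) := by
        apply mul_le_mul_of_nonneg_right (hA x y)
        exact mul_nonneg (enorm_nonneg h) (enorm_nonneg h)

set_option maxHeartbeats 1500000 in
/-- If `A` satisfies the MDC with constant `0 < ε ≤ 0.001`, then for every nonzero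
`x_*` and every `x` with `‖x − x_*‖ ≤ ε‖x_*‖`,
`‖(A_x − A_{x_*})x_*‖ ≤ √(4ε + 16ε/π) ‖x − x_*‖ ≤ (1/8)‖x − x_*‖`. -/
theorem Asgn_difference_bound {m n : ℕ}
    (ε : ℝ) (hε0 : 0 < ε) (hε1 : ε ≤ 0.001)
    (A : Matrix (Fin m) (Fin n) ℝ) (hAmdc : MDC A ε)
    (xstar : Fin n → ℝ) (hxs : xstar ≠ 0)
    (x : Fin n → ℝ) (hclose : enorm' (x - xstar) ≤ ε * enorm' xstar) :
    enorm' ((Asgn A x - Asgn A xstar).mulVec xstar)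
      ≤ Real.sqrt (4 * ε + 16 * ε / π) * enorm' (x - xstar) ∧
    Real.sqrt (4 * ε + 16 * ε / π) * enorm' (x - xstar)
      ≤ (1 / 8) * enorm' (x - xstar) := by
  have hπ : (0:ℝ) < π := Real.pi_pos
  set h := x - xstar with hh
  set r := enorm' xstar with hr
  set H := enorm' h with hHdef
  have hr0 : 0 < r := enorm'_pos xstar hxs
  have hH0 : 0 ≤ H := enorm_nonneg h
  have hCnonneg : (0:ℝ) ≤ 4*ε + 16*ε/π := by positivity
  have hC : Real.sqrt (4 * ε + 16 * ε / π) ≤ 1/8 := by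
    have h3 : (3:ℝ) ≤ π := by linarith [Real.pi_gt_three]
    have h4 : 16*ε/π ≤ 16*ε/3 :=
      div_le_div_of_nonneg_left (by positivity) (by norm_num) h3
    have h1 : 4*ε + 16*ε/π ≤ 1/64 := by
      have : 16*ε/3 = (16/3)*ε := by ring
      rw [this] at h4
      linarith
    calc Real.sqrt (4*ε + 16*ε/π) ≤ Real.sqrt (1/64) := Real.sqrt_le_sqrt h1
      _ = 1/8 := by
          rw [show (1/64:ℝ) = (1/8)^2 by norm_num, Real.sqrt_sq (by norm_num)]
  refine ⟨?_, mul_le_mul_of_nonneg_right hC hH0⟩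
  -- geometric setup
  set P := dotp x x with hPdef
  set Q := dotp x xstar with hQdef
  set R := dotp xstar xstar with hRdef
  have hR : R = r^2 := (enorm_sq xstar).symm
  have hhx : dotp h xstar = Q - R := by rw [hh, dotp_sub_left]
  have hH2 : H^2 = P - 2*Q + R := by
    rw [hHdef, enorm_sq, hh, dotp_sub_left, dotp_sub_right, dotp_sub_right,
      dotp_comm xstar x, ← hPdef, ← hQdef, ← hRdef]
    ring
  have hCS : Q^2 ≤ P * R := dotp_cauchy x xstar
  have habsd : |dotp h xstar| ≤ H * r := by
    have hcs := dotp_cauchy h xstar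
    rw [← enorm_sq h, ← hHdef, ← enorm_sq xstar, ← hr] at hcs
    calc |dotp h xstar| = Real.sqrt ((dotp h xstar)^2) := (Real.sqrt_sq_eq_abs _).symm
      _ ≤ Real.sqrt ((H*r)^2) := Real.sqrt_le_sqrt (by nlinarith [hcs])
      _ = H * r := Real.sqrt_sq (mul_nonneg hH0 hr0.le)
  have hQpos : 0 < Q := by
    have h1 : H * r ≤ ε * r * r := mul_le_mul_of_nonneg_right hclose hr0.le
    have h2 : dotp h xstar ≥ -(H*r) := by linarith [(abs_le.1 habsd).1]
    have hrr : 0 < r * r := mul_pos hr0 hr0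
    have h3 : ε * r * r ≤ 0.001 * (r * r) := by
      have := mul_le_mul_of_nonneg_right hε1 hrr.le
      linarith [this]
    have h4 : r^2 = r*r := sq r
    linarith [hhx, hR]
  have hx0 : x ≠ 0 := by
    intro hx0
    rw [hx0] at hQdef
    rw [dotp_zero_left] at hQdef
    linarith
  set p := enorm' x with hp
  have hp0 : 0 < p := enorm'_pos x hx0
  have hP : P = p^2 := (enorm_sq x).symm
  have hQle : Q ≤ p * r := by nlinarith [hCS, mul_pos hp0 hr0]
  set c' := Q / (p * r) with hc'
  have hc'1 : c' ≤ 1 := by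
    rw [hc', div_le_one (mul_pos hp0 hr0)]; exact hQle
  have hc'0 : 0 < c' := div_pos hQpos (mul_pos hp0 hr0)
  have hθdef : angle' x xstar = Real.arccos c' := by
    rw [angle', ← hQdef, ← hp, ← hr, hc']
  set θ := angle' x xstar with hθ
  have hθ0 : 0 ≤ θ := by rw [hθdef]; exact Real.arccos_nonneg _
  have hθhalf : θ ≤ π/2 := by rw [hθdef]; exact Real.arccos_le_pi_div_two.2 hc'0.le
  have hsin : Real.sin θ = Real.sqrt (1 - c'^2) := by rw [hθdef, Real.sin_arccos]
  have hsin0 : 0 ≤ Real.sin θ := by rw [hsin]; exact Real.sqrt_nonneg _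
  have hsinle : Real.sin θ ≤ ε := by
    have hPR : 0 < P * R := by rw [hP, hR]; positivity
    have hHR : H^2 ≤ ε^2 * R := by nlinarith [hclose, hH0, hr0, hR]
    have hkey : P*R - Q^2 ≤ P * H^2 := by nlinarith [sq_nonneg (P - Q)]
    have hc2eq : c'^2 = Q^2/(P*R) := by rw [hc', div_pow, mul_pow, hP, hR]
    have h1 : 1 - c'^2 ≤ ε^2 := by
      rw [hc2eq, sub_le_iff_le_add, ← sub_le_iff_le_add', le_div_iff₀ hPR]
      have h6 : P * H^2 ≤ P * (ε^2*R) :=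
        mul_le_mul_of_nonneg_left hHR (by rw [hP]; positivity)
      nlinarith [hkey, h6]
    calc Real.sin θ = Real.sqrt (1 - c'^2) := hsin
      _ ≤ Real.sqrt (ε^2) := Real.sqrt_le_sqrt h1
      _ = ε := Real.sqrt_sq hε0.le
  have hθle : θ ≤ 2*ε := by
    have hms := Real.mul_le_sin hθ0 hθhalf
    have h2θ : 2*θ ≤ π * Real.sin θ := by
      have := mul_le_mul_of_nonneg_left hms hπ.le
      rw [show π * (2/π*θ) = 2*θ from by field_simp] at this
      exact this
    have hπ4 : π ≤ 4 := Real.pi_le_four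
    have h5 : π * Real.sin θ ≤ 4 * Real.sin θ :=
      mul_le_mul_of_nonneg_right hπ4 hsin0
    linarith [hsinle]
  have hcM : dotp (unitize x) (unitize xstar) = c' := by
    rw [dotp_unitize, ← hQdef, ← hp, ← hr, hc']
  -- step 1 : entrywise comparison
  have hstep1 : enorm' ((Asgn A x - Asgn A xstar).mulVec xstar)
      ≤ enorm' ((Asgn A x - Asgn A xstar).mulVec h) := by
    apply enorm_mono
    intro i
    simp only [Matrix.sub_mulVec, Pi.sub_apply, Asgn_mulVec]
    have hAh : A.mulVec h i = A.mulVec x i - A.mulVec xstar i := by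
      rw [hh, Matrix.mulVec_sub]; rfl
    rw [hAh]
    set s := A.mulVec x i
    set t := A.mulVec xstar i
    have hsq := sign_sq_le s t
    calc (Real.sign s * t - Real.sign t * t)^2
        = ((Real.sign s - Real.sign t) * t)^2 := by ring
      _ ≤ ((Real.sign s - Real.sign t) * (s - t))^2 := hsq
      _ = (Real.sign s * (s - t) - Real.sign t * (s - t))^2 := by ring
  -- step 2 : quadratic form bound
  set Sx := Asgn A x with hSx
  set Sy := Asgn A xstar with hSy
  set mM := dotp h ((Mswap x xstar).mulVec h) with hmM
  have hPxx : dotp h ((Phi x x).mulVec h) = H^2 := by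
    rw [Phi_self x hx0, Matrix.one_mulVec, ← enorm_sq h]
  have hPyy : dotp h ((Phi xstar xstar).mulVec h) = H^2 := by
    rw [Phi_self xstar hxs, Matrix.one_mulVec, ← enorm_sq h]
  have hPxy : dotp h ((Phi x xstar).mulVec h)
      = (π - 2*θ)/π * H^2 + (2*Real.sin θ/π) * mM := by
    rw [dotp_Phi x xstar h hx0 hxs, ← enorm_sq h, ← hHdef, ← hθ, ← hmM]
  have e1 := cross_bound A ε hAmdc x x h
  have e2 := cross_bound A ε hAmdc x xstar h
  have e3 := cross_bound A ε hAmdc xstar xstar h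
  rw [hPxx] at e1
  rw [hPyy] at e3
  rw [hPxy] at e2
  rw [← hSx] at e1 e2
  rw [← hSy] at e2 e3
  have hHH : enorm' h * enorm' h = H^2 := by rw [← hHdef]; ring
  rw [hHH] at e1 e2 e3
  have hBexp : dotp ((Sx - Sy).mulVec h) ((Sx - Sy).mulVec h)
      = dotp (Sx.mulVec h) (Sx.mulVec h) - 2 * dotp (Sx.mulVec h) (Sy.mulVec h)
        + dotp (Sy.mulVec h) (Sy.mulVec h) := by
    rw [Matrix.sub_mulVec, dotp_sub_left, dotp_sub_right, dotp_sub_right,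
      dotp_comm (Sy.mulVec h) (Sx.mulVec h)]
    ring
  -- bound the Mswap term
  have hmterm : -(Real.sin θ) * mM ≤ Real.sin θ * H^2 := by
    by_cases hcc : (dotp (unitize x) (unitize xstar))^2 = 1
    · have hc2 : c'^2 = 1 := by rw [← hcM]; exact hcc
      have hs0 : Real.sin θ = 0 := by
        rw [hsin, show (1:ℝ) - c'^2 = 0 from by rw [hc2]; ring, Real.sqrt_zero]
      rw [hs0]; norm_num
    · have hmb := abs_dotp_Mswap_le x xstar h hx0 hxs hcc
      rw [enorm_sq, ← enorm_sq h, ← hHdef, ← hmM] at hmb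
      have hneg : -mM ≤ H^2 := by linarith [(abs_le.1 hmb).1]
      calc -(Real.sin θ) * mM = Real.sin θ * (-mM) := by ring
        _ ≤ Real.sin θ * H^2 := mul_le_mul_of_nonneg_left hneg hsin0
  have hquad : dotp ((Sx - Sy).mulVec h) ((Sx - Sy).mulVec h)
      ≤ (4*ε + 16*ε/π) * H^2 := by
    rw [hBexp]
    have q1 : dotp (Sx.mulVec h) (Sx.mulVec h) ≤ H^2 + ε*H^2 := by
      have := (abs_le.1 e1).2; linarith
    have q3 : dotp (Sy.mulVec h) (Sy.mulVec h) ≤ H^2 + ε*H^2 := by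
      have := (abs_le.1 e3).2; linarith
    have q2 : (π - 2*θ)/π * H^2 + (2*Real.sin θ/π) * mM - ε*H^2
        ≤ dotp (Sx.mulVec h) (Sy.mulVec h) := by
      have := (abs_le.1 e2).1; linarith
    have hnum : 4*θ + 4*Real.sin θ - 16*ε ≤ 0 := by
      have := Real.sin_le hθ0; linarith
    have hprod : H^2/π * (4*θ + 4*Real.sin θ - 16*ε) ≤ 0 :=
      mul_nonpos_of_nonneg_of_nonpos (by positivity) hnum
    have hmt2 : -(2*Real.sin θ/π) * mM ≤ (2*Real.sin θ/π) * H^2 := by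
      have h2 := mul_le_mul_of_nonneg_left hmterm (by positivity : (0:ℝ) ≤ 2/π)
      calc -(2*Real.sin θ/π) * mM = 2/π * (-(Real.sin θ) * mM) := by ring
        _ ≤ 2/π * (Real.sin θ * H^2) := h2
        _ = (2*Real.sin θ/π) * H^2 := by ring
    have hiden : 2*H^2 + 4*ε*H^2 - 2*((π - 2*θ)/π * H^2) + 2*((2*Real.sin θ/π) * H^2)
        - (4*ε + 16*ε/π)*H^2 = H^2/π * (4*θ + 4*Real.sin θ - 16*ε) := by
      field_simp
      ring
    linarith [q1, q2, q3, hprod, hiden, hmt2]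
  -- conclude
  have hstep2 : enorm' ((Sx - Sy).mulVec h) ≤ Real.sqrt (4*ε + 16*ε/π) * H := by
    rw [enorm_eq_sqrt_dotp]
    calc Real.sqrt (dotp ((Sx - Sy).mulVec h) ((Sx - Sy).mulVec h))
        ≤ Real.sqrt ((4*ε + 16*ε/π) * H^2) := Real.sqrt_le_sqrt hquad
      _ = Real.sqrt (4*ε + 16*ε/π) * H := by
          rw [Real.sqrt_mul hCnonneg, Real.sqrt_sq hH0]
  calc enorm' ((Asgn A x - Asgn A xstar).mulVec xstar)
      ≤ enorm' ((Sx - Sy).mulVec h) := hstep1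
    _ ≤ Real.sqrt (4*ε + 16*ε/π) * H := hstep2
    _ = Real.sqrt (4 * ε + 16 * ε / π) * H := by norm_num
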